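/- arXiv:1812.01824 — 2 statements merged into one kernel-verified Lean document; each statement's English description precedes it below -/
import Mathlib

section
/- Let E be a topological space, P a Borel probability measure on E, ι an index type, l a filter on ι, and (P_i)_{i∈ι} a family of Borel probability measures on E. Suppose there are continuous functions φ_m : E → ℝ (m ∈ ℕ) with 0 ≤ φ_m ≤ 1 such that (i) lim_{m→∞} ∫_E φ_m dP = 1, and (ii) for every m ∈ ℕ and every bounded continuous function F : E → ℝ, the net i ↦ ∫_E φ_m·F dP_i tends along l to ∫_E φ_m·F dP. Then for every bounded continuous function F : E → ℝ, the net i ↦ ∫_E F dP_i tends along l to ∫_E F dP. -/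
open MeasureTheory Filter Topology

/- If `|F| ≤ C`, then against any probability measure `μ` the cutoff costs at most
`|∫ F dμ - ∫ φ F dμ| ≤ C (1 - ∫ φ dμ)`. Taking `F = 1` in (ii) gives `∫ φ_m dP_i → ∫ φ_m dP`, so
`limsup_i |∫ F dP_i - ∫ F dP| ≤ 2 C (1 - ∫ φ_m dP)`, which tends to `0` as `m → ∞` by (i). -/

theorem tendsto_of_forall_eventually_dist_le {α ι κ : Type*} [PseudoMetricSpace α]
    {l : Filter ι} {L : Filter κ} [L.NeBot] {f : ι → α} {a : α} {h : κ → ι → ℝ} {c : κ → ℝ}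
    (hc : Tendsto c L (𝓝 0)) (hh : ∀ m, Tendsto (h m) l (𝓝 (c m)))
    (hle : ∀ m, ∀ᶠ i in l, dist (f i) a ≤ h m i) : Tendsto f l (𝓝 a) := by
  refine Metric.tendsto_nhds.2 fun ε hε => ?_
  obtain ⟨m, hm⟩ := (hc.eventually (gt_mem_nhds hε)).exists
  filter_upwards [hle m, (hh m).eventually (gt_mem_nhds hm)] with i hi hi' using hi.trans_lt hi'

theorem abs_integral_sub_integral_mul_le {X : Type*} [MeasurableSpace X] {μ : Measure X}
    [IsProbabilityMeasure μ] {φ F : X → ℝ} (hφm : AEStronglyMeasurable φ μ)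
    (hFm : AEStronglyMeasurable F μ) (hφ01 : ∀ x, φ x ∈ Set.Icc (0 : ℝ) 1) {C : ℝ}
    (hC : ∀ x, |F x| ≤ C) :
    |∫ x, F x ∂μ - ∫ x, φ x * F x ∂μ| ≤ C * (1 - ∫ x, φ x ∂μ) := by
  have hφb : ∀ x, ‖φ x‖ ≤ 1 := fun x => abs_le.2 ⟨by linarith [(hφ01 x).1], (hφ01 x).2⟩
  have hφ : Integrable φ μ := .of_bound hφm 1 (.of_forall hφb)
  have hF : Integrable F μ := .of_bound hFm C (.of_forall hC)
  have hφF : Integrable (fun x => φ x * F x) μ := hF.bdd_mul hφm (.of_forall hφb)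
  calc |∫ x, F x ∂μ - ∫ x, φ x * F x ∂μ| = ‖∫ x, (1 - φ x) * F x ∂μ‖ := by
        simp_rw [← integral_sub hF hφF, sub_mul, one_mul, Real.norm_eq_abs]
    _ ≤ ∫ x, C * (1 - φ x) ∂μ := by
        refine norm_integral_le_of_norm_le (((integrable_const 1).sub hφ).const_mul C)
          (.of_forall fun x => ?_)
        rw [norm_mul, Real.norm_of_nonneg (sub_nonneg.2 (hφ01 x).2), mul_comm]
        exact mul_le_mul_of_nonneg_right (hC x) (sub_nonneg.2 (hφ01 x).2)
    _ = C * (1 - ∫ x, φ x ∂μ) := by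
        rw [integral_const_mul, integral_sub (integrable_const 1) hφ, integral_const]
        simp

/-- Abstract cutoff argument. Let `E` be a topological space, `P` a Borel
probability measure on `E`, `l` a filter on an index type `ι` and `(P_i)` Borel probability
measures on `E`. Suppose there are continuous `φ_m : E → ℝ` with `0 ≤ φ_m ≤ 1` such that
`∫ φ_m dP → 1` as `m → ∞`, and for every `m` and every bounded continuous `F : E → ℝ`,
`∫ φ_m · F dP_i → ∫ φ_m · F dP` along `l`. Then for every bounded continuous `F : E → ℝ`,
`∫ F dP_i → ∫ F dP` along `l`. -/
theorem cutoff_weak_convergence {E : Type*} [TopologicalSpace E] [MeasurableSpace E]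
    [BorelSpace E] {ι : Type*} (l : Filter ι)
    (P : Measure E) [IsProbabilityMeasure P]
    (Pi : ι → Measure E) [∀ i, IsProbabilityMeasure (Pi i)]
    (φ : ℕ → E → ℝ) (hφc : ∀ m, Continuous (φ m))
    (hφ01 : ∀ m x, φ m x ∈ Set.Icc (0:ℝ) 1)
    (h1 : Tendsto (fun m : ℕ => ∫ x, φ m x ∂P) atTop (nhds 1))
    (h2 : ∀ m : ℕ, ∀ F : E → ℝ, Continuous F → (∃ C, ∀ x, |F x| ≤ C) →
      Tendsto (fun i => ∫ x, φ m x * F x ∂(Pi i)) l (nhds (∫ x, φ m x * F x ∂P))) :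
    ∀ F : E → ℝ, Continuous F → (∃ C, ∀ x, |F x| ≤ C) →
      Tendsto (fun i => ∫ x, F x ∂(Pi i)) l (nhds (∫ x, F x ∂P)) := by
  intro F hFc ⟨C, hC⟩
  have hφm : ∀ m {μ : Measure E}, AEStronglyMeasurable (φ m) μ :=
    fun m => (hφc m).aestronglyMeasurable
  have cutoff_error : ∀ m (μ : Measure E) [IsProbabilityMeasure μ],
      |∫ x, F x ∂μ - ∫ x, φ m x * F x ∂μ| ≤ C * (1 - ∫ x, φ m x ∂μ) := fun m μ _ =>
    abs_integral_sub_integral_mul_le (hφm m) hFc.aestronglyMeasurable (hφ01 m) hC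
  have hmass : ∀ m, Tendsto (fun i => ∫ x, φ m x ∂(Pi i)) l (𝓝 (∫ x, φ m x ∂P)) := fun m => by
    simpa using h2 m (fun _ => 1) continuous_const ⟨1, by simp⟩
  refine tendsto_of_forall_eventually_dist_le (L := atTop)
    (h := fun m i => C * (1 - ∫ x, φ m x ∂(Pi i))
      + |∫ x, φ m x * F x ∂(Pi i) - ∫ x, φ m x * F x ∂P| + C * (1 - ∫ x, φ m x ∂P))
    (c := fun m => 2 * C * (1 - ∫ x, φ m x ∂P)) ?_ (fun m => ?_) (fun m => .of_forall fun i => ?_)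
  · simpa using (h1.const_sub 1).const_mul (2 * C)
  · convert ((((hmass m).const_sub 1).const_mul C).add
      ((h2 m F hFc ⟨C, hC⟩).sub_const _).abs).add_const _ using 2
    simp only [sub_self, abs_zero]
    ring
  · have triangle₁ :=
      abs_sub_le (∫ x, F x ∂(Pi i)) (∫ x, φ m x * F x ∂(Pi i)) (∫ x, φ m x * F x ∂P)
    have triangle₂ := abs_sub_le (∫ x, F x ∂(Pi i)) (∫ x, φ m x * F x ∂P) (∫ x, F x ∂P)
    rw [abs_sub_comm (∫ x, φ m x * F x ∂P)] at triangle₂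
    rw [Real.dist_eq]
    linarith [cutoff_error m (Pi i), cutoff_error m P]
end

section
/- Let n ≥ 1, 0 = t_0 < t_1 < … < t_N = T with increments Δ_i = t_i − t_{i−1}, x_0 ∈ ℝ^n, and let μ be the probability measure on (ℝ^n)^N with density ∏_{i=1}^N (2π Δ_i)^{-n/2} exp(−|x_i − x_{i−1}|²/(2Δ_i)) with respect to Lebesgue measure. Let f : (ℝ^n)^N → ℝ be continuously differentiable with compact support, and let k_0 = 0, k_1, …, k_N ∈ ℝ^n. Then ∫ Σ_{i=1}^N ⟨∇_{x_i} f(x), k_i⟩ dμ(x) = ∫ f(x) · Σ_{i=1}^N ⟨k_i − k_{i−1}, x_i − x_{i−1}⟩/Δ_i dμ(x), where ∇_{x_i} f denotes the gradient of f in the i-th ℝ^n-block of variables. -/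
/-!
The density of `μ` is `C * exp (-q)` with `q x = ∑ᵢ ‖xᵢ - xᵢ₋₁‖² / (2 Δᵢ)`, and the derivative of
`q` in the direction `k` is exactly the discrete stochastic integral
`∑ᵢ ⟪kᵢ - kᵢ₋₁, xᵢ - xᵢ₋₁⟫ / Δᵢ`. Integrating by parts against Lebesgue measure moves the
derivative from `f` onto the density, and `∂ₖ (C * exp (-q)) = -(C * exp (-q)) * ∂ₖ q`.
-/

open MeasureTheory Real

theorem integral_withDensity_ofReal {X : Type*} [MeasurableSpace X] {μ : Measure X}
    {ρ : X → ℝ} (hρ : Measurable ρ) (hρ_nonneg : ∀ x, 0 ≤ ρ x) (g : X → ℝ) :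
    ∫ x, g x ∂μ.withDensity (fun x => ENNReal.ofReal (ρ x)) = ∫ x, ρ x * g x ∂μ := by
  rw [integral_withDensity_eq_integral_toReal_smul hρ.ennreal_ofReal
    (Filter.Eventually.of_forall fun _ => ENNReal.ofReal_lt_top)]
  simp only [ENNReal.toReal_ofReal (hρ_nonneg _), smul_eq_mul]

section IntegrationByParts

variable {E : Type*} [NormedAddCommGroup E] [NormedSpace ℝ E] [FiniteDimensional ℝ E]
  [MeasurableSpace E] [BorelSpace E] {μ : Measure E} [μ.IsAddHaarMeasure]

theorem integral_mul_fderiv_eq_neg_fderiv_mul_of_hasCompactSupport {f g : E → ℝ}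
    (hf : ContDiff ℝ 1 f) (hfc : HasCompactSupport f) (hg : ContDiff ℝ 1 g) (v : E) :
    ∫ x, f x * fderiv ℝ g x v ∂μ = -∫ x, fderiv ℝ f x v * g x ∂μ := by
  have hf' : Continuous fun x => fderiv ℝ f x v :=
    (hf.continuous_fderiv one_ne_zero).clm_apply continuous_const
  have hg' : Continuous fun x => fderiv ℝ g x v :=
    (hg.continuous_fderiv one_ne_zero).clm_apply continuous_const
  exact integral_mul_fderiv_eq_neg_fderiv_mul_of_integrable
    ((hf'.mul hg.continuous).integrable_of_hasCompactSupport (hfc.fderiv_apply ℝ v).mul_right)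
    ((hf.continuous.mul hg').integrable_of_hasCompactSupport hfc.mul_right)
    ((hf.continuous.mul hg.continuous).integrable_of_hasCompactSupport hfc.mul_right)
    (fun x _ => (hf.differentiable one_ne_zero) x) (fun x _ => (hg.differentiable one_ne_zero) x)

theorem integral_fderiv_withDensity_exp_neg {f q : E → ℝ} (hf : ContDiff ℝ 1 f)
    (hfc : HasCompactSupport f) (hq : ContDiff ℝ 1 q) {C : ℝ} (hC : 0 ≤ C) (v : E) :
    ∫ x, fderiv ℝ f x v ∂μ.withDensity (fun x => ENNReal.ofReal (C * exp (-q x))) =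
      ∫ x, f x * fderiv ℝ q x v ∂μ.withDensity (fun x => ENNReal.ofReal (C * exp (-q x))) := by
  set ρ : E → ℝ := fun x => C * exp (-q x) with hρ_def
  have hρ : ContDiff ℝ 1 ρ := contDiff_const.mul hq.neg.exp
  have hρ_nonneg : ∀ x, 0 ≤ ρ x := fun x => mul_nonneg hC (exp_pos _).le
  have hρ' : ∀ x, fderiv ℝ ρ x v = -(ρ x * fderiv ℝ q x v) := fun x => by
    have hqx := (hq.differentiable one_ne_zero x).hasFDerivAt
    rw [HasFDerivAt.fderiv (f := ρ) (hqx.neg.exp.const_mul C)]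
    simp only [Pi.neg_apply, smul_neg, neg_apply, smul_apply, smul_eq_mul, hρ_def]
    ring
  rw [integral_withDensity_ofReal hρ.continuous.measurable hρ_nonneg,
    integral_withDensity_ofReal hρ.continuous.measurable hρ_nonneg]
  calc ∫ x, ρ x * fderiv ℝ f x v ∂μ = -∫ x, f x * fderiv ℝ ρ x v ∂μ := by
        simp only [mul_comm (ρ _), integral_mul_fderiv_eq_neg_fderiv_mul_of_hasCompactSupport
          hf hfc hρ, neg_neg]
    _ = ∫ x, ρ x * (f x * fderiv ℝ q x v) ∂μ := by
        rw [← integral_neg]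
        congr 1 with x
        rw [hρ']
        ring

end IntegrationByParts

section PathIncrement

variable {E : Type*} {N : ℕ}

/-- Indexing from `0`: `pathIncrement x₀ x i = x i - x (i - 1)`, where `x (-1) = x₀`. -/
def pathIncrement [Sub E] (x₀ : E) (x : Fin N → E) (i : Fin N) : E :=
  (Fin.cons x₀ x : Fin (N + 1) → E) i.succ - (Fin.cons x₀ x : Fin (N + 1) → E) i.castSucc

theorem pathIncrement_add [AddCommGroup E] (x₀ y₀ : E) (x y : Fin N → E) :
    pathIncrement (x₀ + y₀) (x + y) = pathIncrement x₀ x + pathIncrement y₀ y := by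
  have hcons :
      (Fin.cons (x₀ + y₀) (x + y) : Fin (N + 1) → E) = Fin.cons x₀ x + Fin.cons y₀ y := by
    ext j
    refine Fin.cases ?_ (fun j => ?_) j <;> simp
  ext i
  simp only [pathIncrement, hcons, Pi.add_apply]
  abel

variable [NormedAddCommGroup E] [NormedSpace ℝ E]

variable (E N) in
def pathIncrementCLM : (Fin N → E) →L[ℝ] Fin N → E :=
  ContinuousLinearMap.pi (fun i : Fin N =>
      ContinuousLinearMap.proj (R := ℝ) (φ := fun _ : Fin (N + 1) => E) i.succ -
        ContinuousLinearMap.proj i.castSucc) ∘L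
    ContinuousLinearMap.finCons (R := ℝ) (M := fun _ : Fin (N + 1) => E) 0
      (ContinuousLinearMap.id ℝ (Fin N → E))

@[simp]
theorem pathIncrementCLM_apply (x : Fin N → E) :
    pathIncrementCLM E N x = pathIncrement 0 x := by
  ext i
  simp [pathIncrementCLM, pathIncrement]

theorem pathIncrement_eq_add_pathIncrementCLM (x₀ : E) (x : Fin N → E) :
    pathIncrement x₀ x = pathIncrement x₀ 0 + pathIncrementCLM E N x := by
  rw [pathIncrementCLM_apply, ← pathIncrement_add, add_zero, zero_add]

theorem hasFDerivAt_pathIncrement (x₀ : E) (x : Fin N → E) :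
    HasFDerivAt (pathIncrement x₀) (pathIncrementCLM E N) x := by
  rw [funext (pathIncrement_eq_add_pathIncrementCLM x₀)]
  exact (pathIncrementCLM E N).hasFDerivAt.const_add _

theorem contDiff_pathIncrement (x₀ : E) {m : WithTop ℕ∞} :
    ContDiff ℝ m (pathIncrement (N := N) x₀) := by
  rw [funext (pathIncrement_eq_add_pathIncrementCLM x₀)]
  exact contDiff_const.add (pathIncrementCLM E N).contDiff

end PathIncrement

section PathEnergy

variable {E : Type*} [NormedAddCommGroup E] [InnerProductSpace ℝ E] {N : ℕ}

noncomputable def pathEnergy (Δ : Fin N → ℝ) (x₀ : E) (x : Fin N → E) : ℝ :=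
  ∑ i, ‖pathIncrement x₀ x i‖ ^ 2 / (2 * Δ i)

theorem contDiff_pathEnergy (Δ : Fin N → ℝ) (x₀ : E) {m : WithTop ℕ∞} :
    ContDiff ℝ m (pathEnergy Δ x₀) :=
  ContDiff.sum fun i _ => ((contDiff_norm_sq ℝ).comp
    ((contDiff_apply ℝ E i).comp (contDiff_pathIncrement x₀))).div_const _

theorem fderiv_pathEnergy_apply (Δ : Fin N → ℝ) (x₀ : E) (x k : Fin N → E) :
    fderiv ℝ (pathEnergy Δ x₀) x k =
      ∑ i, inner ℝ (pathIncrement 0 k i) (pathIncrement x₀ x i) / Δ i := by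
  have h : ∀ i, HasFDerivAt (fun x => (2 * Δ i)⁻¹ * ‖pathIncrement x₀ x i‖ ^ 2)
      ((2 * Δ i)⁻¹ • 2 • (innerSL ℝ (pathIncrement x₀ x i)).comp
        ((ContinuousLinearMap.proj i).comp (pathIncrementCLM E N))) x := fun i =>
    (((hasFDerivAt_apply i _).comp x (hasFDerivAt_pathIncrement x₀ x)).norm_sq).const_mul _
  have := HasFDerivAt.fun_sum (u := Finset.univ) fun i _ => h i
  rw [show pathEnergy Δ x₀ = fun x => ∑ i, (2 * Δ i)⁻¹ * ‖pathIncrement x₀ x i‖ ^ 2 from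
    funext fun x => Finset.sum_congr rfl fun i _ => div_eq_inv_mul _ _, this.fderiv]
  simp only [sum_apply, smul_apply, ContinuousLinearMap.comp_apply, pathIncrementCLM_apply,
    ContinuousLinearMap.proj_apply, innerSL_apply_apply, nsmul_eq_mul, Nat.cast_ofNat, smul_eq_mul,
    real_inner_comm]
  refine Finset.sum_congr rfl fun i _ => ?_
  field_simp

end PathEnergy

theorem gaussian_integration_by_parts_general (n N : ℕ)
    (t : Fin (N + 1) → ℝ) (htm : StrictMono t)
    (Δ : Fin N → ℝ) (hΔ : ∀ i, Δ i = t i.succ - t i.castSucc)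
    (x₀ : EuclideanSpace ℝ (Fin n))
    (μ : Measure (Fin N → EuclideanSpace ℝ (Fin n)))
    (hμ : μ = volume.withDensity fun x => ENNReal.ofReal
      (∏ i : Fin N,
        (2 * π * Δ i) ^ (-(n : ℝ) / 2) *
          Real.exp (-‖(Fin.cons x₀ x : Fin (N + 1) → EuclideanSpace ℝ (Fin n)) i.succ -
            (Fin.cons x₀ x : Fin (N + 1) → EuclideanSpace ℝ (Fin n)) i.castSucc‖ ^ 2 /
            (2 * Δ i))))
    (f : (Fin N → EuclideanSpace ℝ (Fin n)) → ℝ)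
    (hf : ContDiff ℝ 1 f) (hfc : HasCompactSupport f)
    (k : Fin N → EuclideanSpace ℝ (Fin n)) :
    ∫ x, (∑ i : Fin N, fderiv ℝ f x (Pi.single i (k i))) ∂μ
      = ∫ x, f x *
          (∑ i : Fin N,
            (inner ℝ ((Fin.cons 0 k : Fin (N + 1) → EuclideanSpace ℝ (Fin n)) i.succ -
                (Fin.cons 0 k : Fin (N + 1) → EuclideanSpace ℝ (Fin n)) i.castSucc)
              ((Fin.cons x₀ x : Fin (N + 1) → EuclideanSpace ℝ (Fin n)) i.succ -
                (Fin.cons x₀ x : Fin (N + 1) → EuclideanSpace ℝ (Fin n)) i.castSucc) : ℝ) /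
              Δ i) ∂μ := by
  set C := ∏ i : Fin N, (2 * π * Δ i) ^ (-(n : ℝ) / 2)
  have hC : 0 ≤ C := Finset.prod_nonneg fun i _ => by
    have : 0 < Δ i := hΔ i ▸ sub_pos.2 (htm i.castSucc_lt_succ)
    positivity
  have hdensity : ∀ x, ∏ i : Fin N, (2 * π * Δ i) ^ (-(n : ℝ) / 2) *
      exp (-‖pathIncrement x₀ x i‖ ^ 2 / (2 * Δ i)) = C * exp (-pathEnergy Δ x₀ x) := fun x => by
    rw [Finset.prod_mul_distrib, ← exp_sum, pathEnergy, ← Finset.sum_neg_distrib]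
    simp only [neg_div, C]
  have hsum : ∀ x, ∑ i, fderiv ℝ f x (Pi.single i (k i)) = fderiv ℝ f x k := fun x => by
    rw [← map_sum, Finset.univ_sum_single]
  simp only [hsum, ← pathIncrement.eq_1, hμ, hdensity]
  rw [integral_fderiv_withDensity_exp_neg hf hfc (contDiff_pathEnergy Δ x₀) hC k]
  simp only [fderiv_pathEnergy_apply]

/-- Finite-dimensional integration by parts. Let `0 = t_0 < ⋯ < t_N = T` with
increments `Δ_i`, `x_0 ∈ ℝ^n`, and let `μ` be the probability measure on `(ℝ^n)^N` with
Gaussian density `∏_i (2πΔ_i)^{-n/2} exp(−|x_i − x_{i−1}|²/(2Δ_i))` with respect to Lebesgue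
measure. For `f` continuously differentiable with compact support and vectors `k_1,…,k_N`
(with `k_0 = 0`):
`∫ Σ_i ⟨∇_{x_i} f(x), k_i⟩ dμ = ∫ f(x) · Σ_i ⟨k_i − k_{i−1}, x_i − x_{i−1}⟩/Δ_i dμ`. -/
theorem gaussian_integration_by_parts (n N : ℕ) (hn : 1 ≤ n) (hN : 1 ≤ N)
    (T : ℝ) (hT : 0 < T) (t : Fin (N + 1) → ℝ) (htm : StrictMono t)
    (ht0 : t 0 = 0) (htT : t (Fin.last N) = T)
    (Δ : Fin N → ℝ) (hΔ : ∀ i, Δ i = t i.succ - t i.castSucc)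
    (x₀ : EuclideanSpace ℝ (Fin n))
    (μ : Measure (Fin N → EuclideanSpace ℝ (Fin n)))
    (hμ : μ = volume.withDensity fun x => ENNReal.ofReal
      (∏ i : Fin N,
        (2 * π * Δ i) ^ (-(n : ℝ) / 2) *
          Real.exp (-‖(Fin.cons x₀ x : Fin (N + 1) → EuclideanSpace ℝ (Fin n)) i.succ -
            (Fin.cons x₀ x : Fin (N + 1) → EuclideanSpace ℝ (Fin n)) i.castSucc‖ ^ 2 /
            (2 * Δ i))))
    (f : (Fin N → EuclideanSpace ℝ (Fin n)) → ℝ)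
    (hf : ContDiff ℝ 1 f) (hfc : HasCompactSupport f)
    (k : Fin N → EuclideanSpace ℝ (Fin n)) :
    ∫ x, (∑ i : Fin N, fderiv ℝ f x (Pi.single i (k i))) ∂μ
      = ∫ x, f x *
          (∑ i : Fin N,
            (inner ℝ ((Fin.cons 0 k : Fin (N + 1) → EuclideanSpace ℝ (Fin n)) i.succ -
                (Fin.cons 0 k : Fin (N + 1) → EuclideanSpace ℝ (Fin n)) i.castSucc)
              ((Fin.cons x₀ x : Fin (N + 1) → EuclideanSpace ℝ (Fin n)) i.succ -
                (Fin.cons x₀ x : Fin (N + 1) → EuclideanSpace ℝ (Fin n)) i.castSucc) : ℝ) /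
              Δ i) ∂μ :=
  gaussian_integration_by_parts_general n N t htm Δ hΔ x₀ μ hμ f hf hfc k
end
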